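/- Given single-piece existential rules R1: B1 → H1 and R2: B2 → H2 with disjoint variables, and a piece-unifier μ = (B2', H1', u) of B2 with R1 in which some frontier variable of R2 is unified with an existential variable of R1, the existential composition R2 ∘_μ R1 = u(B1) ∪ u(B2 \ B2') → ∃ u(H1) ∪ u(H2) (existentially quantifying the images of existential variables) is logically entailed by {R1, R2}. -/

import Mathlib

open scoped Classical
noncomputable section

namespace ER

/-- Terms: constants or variables (variables occurring in instances are called nulls). -/
inductive Term where
  | const : ℕ → Term
  | var : ℕ → Term
deriving DecidableEq

def Term.isConst : Term → Prop
  | .const _ => True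
  | .var _ => False

/-- An atom `p(t₁,…,tₙ)`. -/
structure Atom where
  pred : ℕ
  args : List Term
deriving DecidableEq

def Atom.terms (a : Atom) : Set Term := {t | t ∈ a.args}
def Atom.vars (a : Atom) : Set ℕ := {v | Term.var v ∈ a.args}

def termsOf (S : Set Atom) : Set Term := ⋃ a ∈ S, a.terms
def varsOf (S : Set Atom) : Set ℕ := ⋃ a ∈ S, a.vars
/-- The nulls (non-constant terms) occurring in a set of atoms. -/
def nullsOf (S : Set Atom) : Set Term := {t | t ∈ termsOf S ∧ ¬ t.isConst}

def Term.subst (σ : ℕ → Term) : Term → Term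
  | .const c => .const c
  | .var v => σ v

def Atom.subst (σ : ℕ → Term) (a : Atom) : Atom := ⟨a.pred, a.args.map (Term.subst σ)⟩
def substSet (σ : ℕ → Term) (S : Set Atom) : Set Atom := (Atom.subst σ) '' S

/-- A homomorphism from `S1` to `S2`: a substitution of variables by terms mapping `S1` into `S2`. -/
def isHom (σ : ℕ → Term) (S1 S2 : Set Atom) : Prop := substSet σ S1 ⊆ S2

/-- An injective homomorphism (injective on the terms of the source). -/
def isInjHom (σ : ℕ → Term) (S1 S2 : Set Atom) : Prop :=
  isHom σ S1 S2 ∧ Set.InjOn (Term.subst σ) (termsOf S1)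

/-- An instance is a finite set of ground atoms. -/
def IsInstance (I : Set Atom) : Prop := I.Finite ∧ ∀ t ∈ termsOf I, t.isConst

/-- An existential rule, given by its body and head. -/
structure Rule where
  body : Set Atom
  head : Set Atom

def Rule.frontier (R : Rule) : Set ℕ := varsOf R.body ∩ varsOf R.head
def Rule.exist (R : Rule) : Set ℕ := varsOf R.head \ varsOf R.body

/-- Well-formed rule: finite non-empty body and head, no constants. -/
def WfRule (R : Rule) : Prop :=
  R.body.Finite ∧ R.head.Finite ∧ R.body.Nonempty ∧ R.head.Nonempty ∧
  ∀ t ∈ termsOf (R.body ∪ R.head), ¬ t.isConst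

def WfList (L : List Rule) : Prop := ∀ R ∈ L, WfRule R

/-- Restriction of a substitution to a set of variables (default value elsewhere). -/
def restrict (f : ℕ → Term) (F : Set ℕ) : ℕ → Term :=
  fun v => if v ∈ F then f v else Term.const 0

/-- A semi-oblivious naming of nulls for the rules of `L`: the null created for an
existential variable depends only on the rule and the restriction of the trigger to the
frontier, and distinct such data yield distinct nulls. -/
def SONaming (L : List Rule) (ν : Rule → (ℕ → Term) → ℕ → ℕ) : Prop :=
  (∀ R ∈ L, ∀ f g : ℕ → Term,
      restrict f R.frontier = restrict g R.frontier → ν R f = ν R g) ∧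
  (∀ R ∈ L, ∀ R' ∈ L, ∀ f f' x x', ν R f x = ν R' f' x' →
      R = R' ∧ restrict f R.frontier = restrict f' R'.frontier ∧ x = x')

/-- The safe extension of a trigger `π`, replacing each existential variable by its null. -/
def safeSub (ν : Rule → (ℕ → Term) → ℕ → ℕ) (R : Rule) (π : ℕ → Term) : ℕ → Term :=
  fun y => if y ∈ R.exist then Term.var (ν R (restrict π R.frontier) y) else π y

/-- One breadth-first semi-oblivious chase step. -/
def chaseStep (ν : Rule → (ℕ → Term) → ℕ → ℕ) (L : List Rule) (S : Set Atom) : Set Atom :=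
  S ∪ {a | ∃ R ∈ L, ∃ π : ℕ → Term, isHom π R.body S ∧ a ∈ substSet (safeSub ν R π) R.head}

/-- The breadth-first semi-oblivious chase. -/
def chaseF (ν : Rule → (ℕ → Term) → ℕ → ℕ) (L : List Rule) (I : Set Atom) : ℕ → Set Atom
  | 0 => I
  | k + 1 => chaseStep ν L (chaseF ν L I k)

def chaseInf (ν : Rule → (ℕ → Term) → ℕ → ℕ) (L : List Rule) (I : Set Atom) : Set Atom :=
  ⋃ k, chaseF ν L I k

/-- `L'` parallelises `L`. -/
def Parallelises (L' L : List Rule) : Prop :=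
  ∀ ν ν', SONaming L ν → SONaming L' ν' → ∀ I, IsInstance I →
    (∃ σ, isInjHom σ (chaseInf ν L I) (chaseF ν' L' I 1)) ∧
    (∃ σ, isHom σ (chaseF ν' L' I 1) (chaseInf ν L I))

def Parallelisable (L : List Rule) : Prop := ∃ L', WfList L' ∧ Parallelises L' L

/-- Boundedness of the semi-oblivious chase, uniformly over all instances. -/
def Bounded (L : List Rule) : Prop :=
  ∃ k, ∀ ν, SONaming L ν → ∀ I, IsInstance I → chaseF ν L I k = chaseInf ν L I

def ChaseFinite (L : List Rule) : Prop :=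
  ∀ ν, SONaming L ν → ∀ I, IsInstance I → ∃ k, chaseF ν L I k = chaseInf ν L I

/-- Two atoms are `T`-linked if they share a term of `T`. -/
def linked (T : Set Term) (a b : Atom) : Prop := ∃ t ∈ T, t ∈ a.terms ∧ t ∈ b.terms

/-- Connectivity in `S` by a path of atoms where consecutive atoms share a term of `T`. -/
def connectedIn (S : Set Atom) (T : Set Term) (a b : Atom) : Prop :=
  a ∈ S ∧ b ∈ S ∧ Relation.ReflTransGen (fun x y => x ∈ S ∧ y ∈ S ∧ linked T x y) a b

/-- `P` is closed in `S` w.r.t. `T`-linkedness. -/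
def closedIn (S : Set Atom) (T : Set Term) (P : Set Atom) : Prop :=
  ∀ a ∈ S, ∀ b ∈ P, linked T a b → a ∈ P

/-- A piece of `S` w.r.t. `T`: a non-empty subset closed under `T`-linkedness and minimal such. -/
def IsPiece (S : Set Atom) (T : Set Term) (P : Set Atom) : Prop :=
  P.Nonempty ∧ P ⊆ S ∧ closedIn S T P ∧
  ∀ P', P' ⊆ P → P'.Nonempty → closedIn S T P' → P' = P

/-- A single-piece rule: its head is a piece of itself w.r.t. its existential variables. -/
def SinglePiece (R : Rule) : Prop := IsPiece R.head (Term.var '' R.exist) R.head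

/-- The rule used at step `k` of a derivation. -/
def ruleAt (L : List Rule) (r : ℕ → ℕ) (k : ℕ) : Rule := L.getD (r k) ⟨∅, ∅⟩

/-- The set of atoms produced by the `k`-th rule application of a derivation. -/
def producedAt (ν : Rule → (ℕ → Term) → ℕ → ℕ) (L : List Rule) (r : ℕ → ℕ)
    (π : ℕ → ℕ → Term) (k : ℕ) : Set Atom :=
  substSet (safeSub ν (ruleAt L r k) (π k)) (ruleAt L r k).head

def derivState (ν : Rule → (ℕ → Term) → ℕ → ℕ) (L : List Rule) (I : Set Atom)
    (r : ℕ → ℕ) (π : ℕ → ℕ → Term) : ℕ → Set Atom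
  | 0 => I
  | k + 1 => derivState ν L I r π k ∪ producedAt ν L r π k

/-- An `R`-derivation of length `n` from `I`: each step applies a trigger. -/
def IsDeriv (ν : Rule → (ℕ → Term) → ℕ → ℕ) (L : List Rule) (I : Set Atom) (n : ℕ)
    (r : ℕ → ℕ) (π : ℕ → ℕ → Term) : Prop :=
  ∀ k < n, r k < L.length ∧ isHom (π k) (ruleAt L r k).body (derivState ν L I r π k)

/-- A pieceful derivation: each trigger maps its rule's frontier entirely into the terms of
the initial instance, or entirely into the terms produced by a single earlier application. -/
def PiecefulDeriv (ν : Rule → (ℕ → Term) → ℕ → ℕ) (L : List Rule) (I : Set Atom) (n : ℕ)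
    (r : ℕ → ℕ) (π : ℕ → ℕ → Term) : Prop :=
  ∀ k < n, (∀ x ∈ (ruleAt L r k).frontier, π k x ∈ termsOf I) ∨
    ∃ j < k, ∀ x ∈ (ruleAt L r k).frontier, π k x ∈ termsOf (producedAt ν L r π j)

/-- A pieceful rule set: every derivation from every instance is pieceful. -/
def PiecefulSet (L : List Rule) : Prop :=
  ∀ ν, SONaming L ν → ∀ I, IsInstance I → ∀ n r π,
    IsDeriv ν L I n r π → PiecefulDeriv ν L I n r π

/-- First-order structures for the semantics of rules. -/
structure Struct where
  D : Type
  nonempty : Nonempty D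
  interp : ℕ → List D → Prop
  cinterp : ℕ → D

def evalT (M : Struct) (v : ℕ → M.D) : Term → M.D
  | .const c => M.cinterp c
  | .var x => v x

def holdsA (M : Struct) (v : ℕ → M.D) (a : Atom) : Prop :=
  M.interp a.pred (a.args.map (evalT M v))

/-- Satisfaction of (the universal-existential closure of) a rule in a structure. -/
def satRule (M : Struct) (R : Rule) : Prop :=
  ∀ v : ℕ → M.D, (∀ a ∈ R.body, holdsA M v a) →
    ∃ w : ℕ → M.D, (∀ x ∈ varsOf R.body, w x = v x) ∧ ∀ a ∈ R.head, holdsA M w a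

/-- Separating variables of `S' ⊆ S`: variables occurring both in `S'` and in `S \ S'`. -/
def sepVars (S' S : Set Atom) : Set ℕ := varsOf S' ∩ varsOf (S \ S')

/-- A piece-unifier `(S', H', u)` of a set of atoms `S` with a rule `R`. -/
def IsPieceUnifier (S : Set Atom) (R : Rule) (S' H' : Set Atom) (u : ℕ → Term) : Prop :=
  Disjoint (varsOf S) (varsOf (R.body ∪ R.head)) ∧
  S'.Nonempty ∧ S' ⊆ S ∧ H' ⊆ R.head ∧
  (∀ x, x ∉ R.frontier ∪ varsOf S' → u x = Term.var x) ∧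
  (∀ x ∈ R.frontier ∪ varsOf S', ∃ y ∈ varsOf R.head, u x = Term.var y) ∧
  (∀ x ∈ R.frontier, ∃ y ∈ R.frontier, u x = Term.var y) ∧
  (∀ x ∈ sepVars S' S, ∃ y ∈ R.frontier, u x = Term.var y) ∧
  substSet u S' = substSet u H'

/-- The existential stability property of a piece-unifier of `body R2` with `R1`. -/
def StableUnifier (R2 R1 : Rule) (B2' : Set Atom) (u : ℕ → Term) : Prop :=
  (∀ x ∈ R2.frontier, u x ∉ Term.var '' R1.exist) ∨ R2.frontier ⊆ varsOf B2'

/-- The existential composition `R2 ∘_μ R1` w.r.t. a piece-unifier `μ = (B2', H1', u)`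
of `body R2` with `R1`. -/
def compose (R2 R1 : Rule) (B2' : Set Atom) (u : ℕ → Term) : Rule :=
  if ∀ x ∈ R2.frontier, u x ∉ Term.var '' R1.exist then
    ⟨substSet u R1.body ∪ substSet u (R2.body \ B2'), substSet u R2.head⟩
  else
    ⟨substSet u R1.body ∪ substSet u (R2.body \ B2'),
     substSet u R1.head ∪ substSet u R2.head⟩

/-- The closure `R*` of a rule set under existential composition. -/
inductive InClosure (𝒮 : Set Rule) : Rule → Prop
  | base {R : Rule} : R ∈ 𝒮 → InClosure 𝒮 R
  | comp {Ri Rj : Rule} {B' H' : Set Atom} {u : ℕ → Term} :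
      InClosure 𝒮 Ri → InClosure 𝒮 Rj →
      IsPieceUnifier Ri.body Rj B' H' u → InClosure 𝒮 (compose Ri Rj B' u)

def ruleSet (L : List Rule) : Set Rule := {R | R ∈ L}

/-- The stability property for a (possibly infinite) rule set. -/
def StableSet (𝒮 : Set Rule) : Prop :=
  ∀ R1 ∈ 𝒮, ∀ R2 ∈ 𝒮, ∀ B2' H1' u,
    IsPieceUnifier R2.body R1 B2' H1' u → StableUnifier R2 R1 B2' u

/-- `J` is a result of one breadth-first chase step of a (possibly infinite) rule set on `I`,
with fresh pairwise-compatible nulls (semi-oblivious naming). -/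
def OneStepResult (𝒮 : Set Rule) (I J : Set Atom) : Prop :=
  ∃ ν : Rule → (ℕ → Term) → ℕ → ℕ,
    (∀ R ∈ 𝒮, ∀ f x, Term.var (ν R f x) ∉ termsOf I) ∧
    (∀ R ∈ 𝒮, ∀ R' ∈ 𝒮, ∀ f f' x x', ν R f x = ν R' f' x' →
        R = R' ∧ restrict f R.frontier = restrict f' R'.frontier ∧ x = x') ∧
    J = I ∪ {a | ∃ R ∈ 𝒮, ∃ π : ℕ → Term, isHom π R.body I ∧
                  a ∈ substSet (safeSub ν R π) R.head}

/-- `I, R ⊨ q` for a Boolean conjunctive query `q` (a set of atoms). -/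
def Entails (L : List Rule) (I q : Set Atom) : Prop :=
  ∀ ν, SONaming L ν → ∃ k σ, isHom σ q (chaseF ν L I k)

/-- The null `t` occurs in at least `n` atoms of `S`. -/
def occursInAtLeast (S : Set Atom) (t : Term) (n : ℕ) : Prop :=
  ∃ F : Set Atom, F ⊆ {a | a ∈ S ∧ t ∈ a.terms} ∧ F.Finite ∧ n ≤ F.ncard

def FrontierGuarded (R : Rule) : Prop := ∃ a ∈ R.body, R.frontier ⊆ a.vars

def IsDatalog (R : Rule) : Prop := R.exist = ∅ ∧ ∃ a, R.head = {a}

end ER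
/-!
Fire `R1` on `u(B1)`. Its head instantiated by `u` contains `u(H1') = u(B2')`, which together
with `u(B2 \ B2')` gives all of `u(B2)`, so `R2` fires as well. The values chosen for the
existential variables of the two rules never interfere: `u` fixes existential variables and
maps frontier variables to non-existential ones, and the two rules share no variables.
-/

namespace ER

section Semantics

variable {M : Struct}

theorem evalT_subst (v : ℕ → M.D) (σ : ℕ → Term) (t : Term) :
    evalT M v (t.subst σ) = evalT M (fun x => evalT M v (σ x)) t := by
  cases t <;> rfl

theorem holdsA_subst (v : ℕ → M.D) (σ : ℕ → Term) (a : Atom) :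
    holdsA M v (a.subst σ) ↔ holdsA M (fun x => evalT M v (σ x)) a := by
  simp only [holdsA, Atom.subst, List.map_map, Function.comp_def, evalT_subst]

theorem holdsA_congr {v v' : ℕ → M.D} {a : Atom} (h : ∀ x ∈ a.vars, v x = v' x) :
    holdsA M v a ↔ holdsA M v' a := by
  unfold holdsA
  rw [List.map_congr_left]
  rintro (c | x) hx
  · rfl
  · exact h x hx

theorem evalT_piecewise {E : Set ℕ} {w v : ℕ → M.D} {t : Term} (ht : t ∉ Term.var '' E) :
    evalT M (E.piecewise w v) t = evalT M v t := by
  cases t with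
  | const c => rfl
  | var x => exact Set.piecewise_eq_of_notMem _ _ _ fun hx => ht ⟨x, hx, rfl⟩

end Semantics

theorem mem_varsOf {S : Set Atom} {x : ℕ} : x ∈ varsOf S ↔ ∃ a ∈ S, x ∈ a.vars := by
  simp [varsOf]

theorem mem_varsOf_of {S : Set Atom} {a : Atom} {x : ℕ} (ha : a ∈ S) (hx : x ∈ a.vars) :
    x ∈ varsOf S :=
  mem_varsOf.2 ⟨a, ha, hx⟩

theorem varsOf_mono {S T : Set Atom} (h : S ⊆ T) : varsOf S ⊆ varsOf T :=
  Set.biUnion_subset_biUnion_left h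

theorem varsOf_union {S T : Set Atom} : varsOf (S ∪ T) = varsOf S ∪ varsOf T :=
  Set.biUnion_union S T _

theorem mem_varsOf_substSet {σ : ℕ → Term} {S : Set Atom} {y : ℕ} :
    y ∈ varsOf (substSet σ S) ↔ ∃ x ∈ varsOf S, σ x = .var y := by
  simp only [mem_varsOf, substSet, Set.exists_mem_image, Atom.subst, Atom.vars,
    Set.mem_ofPred_eq, List.mem_map]
  constructor
  · rintro ⟨a, ha, (c | x), hx, hxy⟩
    · cases hxy
    · exact ⟨x, ⟨a, ha, hx⟩, hxy⟩
  · rintro ⟨x, ⟨a, ha, hx⟩, hxy⟩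
    exact ⟨a, ha, .var x, hx, hxy⟩

theorem Rule.exist_subset_varsOf (R : Rule) : R.exist ⊆ varsOf (R.body ∪ R.head) :=
  fun _ hx => varsOf_mono Set.subset_union_right hx.1

theorem notMem_exist_of_disjoint {T : Set Atom} {R : Rule}
    (h : Disjoint (varsOf T) (varsOf (R.body ∪ R.head))) {x : ℕ} (hx : x ∈ varsOf T) :
    x ∉ R.exist :=
  fun hxe => Set.disjoint_left.1 h hx (R.exist_subset_varsOf hxe)

theorem forall_holdsA_piecewise {M : Struct} {T : Set Atom} {E : Set ℕ} {w v : ℕ → M.D}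
    (hE : ∀ x ∈ varsOf T, x ∉ E) :
    (∀ a ∈ T, holdsA M (E.piecewise w v) a) ↔ ∀ a ∈ T, holdsA M v a :=
  forall₂_congr fun _ ha => holdsA_congr fun x hx =>
    Set.piecewise_eq_of_notMem _ _ _ (hE x (mem_varsOf_of ha hx))

theorem satRule.exists_holdsA_substSet_head {M : Struct} {R : Rule} (hM : satRule M R)
    {s : ℕ → Term} {v : ℕ → M.D} (hexist : ∀ x ∈ R.exist, s x = .var x)
    (hfrontier : ∀ x ∈ R.frontier, s x ∉ Term.var '' R.exist)
    (hbody : ∀ a ∈ substSet s R.body, holdsA M v a) :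
    ∃ w : ℕ → M.D, ∀ a ∈ substSet s R.head, holdsA M (R.exist.piecewise w v) a := by
  obtain ⟨w, hwv, hw⟩ := hM (fun x => evalT M v (s x)) fun a ha =>
    (holdsA_subst v s a).1 (hbody _ ⟨a, ha, rfl⟩)
  refine ⟨w, ?_⟩
  rintro _ ⟨a, ha, rfl⟩
  refine (holdsA_subst _ s a).2 ((holdsA_congr fun x hx => ?_).2 (hw a ha))
  have hxh : x ∈ varsOf R.head := mem_varsOf_of ha hx
  by_cases hxe : x ∈ R.exist
  · rw [hexist x hxe]
    exact Set.piecewise_eq_of_mem _ _ _ hxe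
  · have hxb : x ∈ varsOf R.body := not_not.1 fun h => hxe ⟨hxh, h⟩
    rw [evalT_piecewise (hfrontier x ⟨hxb, hxh⟩), hwv x hxb]

namespace IsPieceUnifier

variable {S S' H' : Set Atom} {R : Rule} {u : ℕ → Term}

theorem disjoint (hu : IsPieceUnifier S R S' H' u) :
    Disjoint (varsOf S) (varsOf (R.body ∪ R.head)) :=
  hu.1

theorem subset (hu : IsPieceUnifier S R S' H' u) : S' ⊆ S :=
  hu.2.2.1

theorem subset_head (hu : IsPieceUnifier S R S' H' u) : H' ⊆ R.head :=
  hu.2.2.2.1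

theorem apply_of_notMem (hu : IsPieceUnifier S R S' H' u) {x : ℕ}
    (hxf : x ∉ R.frontier) (hxS' : x ∉ varsOf S') : u x = .var x :=
  hu.2.2.2.2.1 x fun h => h.elim hxf hxS'

theorem exists_apply_mem_head_of_mem_varsOf (hu : IsPieceUnifier S R S' H' u) {x : ℕ}
    (hx : x ∈ varsOf S') : ∃ y ∈ varsOf R.head, u x = .var y :=
  hu.2.2.2.2.2.1 x (.inr hx)

theorem exists_apply_mem_frontier (hu : IsPieceUnifier S R S' H' u) {x : ℕ}
    (hx : x ∈ R.frontier) : ∃ y ∈ R.frontier, u x = .var y :=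
  hu.2.2.2.2.2.2.1 x hx

theorem exists_apply_mem_frontier_of_mem_sepVars (hu : IsPieceUnifier S R S' H' u) {x : ℕ}
    (hx : x ∈ sepVars S' S) : ∃ y ∈ R.frontier, u x = .var y :=
  hu.2.2.2.2.2.2.2.1 x hx

theorem substSet_eq (hu : IsPieceUnifier S R S' H' u) : substSet u S' = substSet u H' :=
  hu.2.2.2.2.2.2.2.2

theorem notMem_frontier_of_mem_varsOf (hu : IsPieceUnifier S R S' H' u) {x : ℕ}
    (hx : x ∈ varsOf S) : x ∉ R.frontier :=
  fun hxf => Set.disjoint_left.1 hu.disjoint hx (varsOf_mono Set.subset_union_left hxf.1)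

theorem apply_of_mem_varsOf_rule (hu : IsPieceUnifier S R S' H' u) {x : ℕ}
    (hx : x ∈ varsOf (R.body ∪ R.head)) (hxf : x ∉ R.frontier) : u x = .var x :=
  hu.apply_of_notMem hxf fun hxS' =>
    Set.disjoint_left.1 hu.disjoint (varsOf_mono hu.subset hxS') hx

theorem apply_of_mem_exist (hu : IsPieceUnifier S R S' H' u) {x : ℕ} (hx : x ∈ R.exist) :
    u x = .var x :=
  hu.apply_of_mem_varsOf_rule (R.exist_subset_varsOf hx) fun hxf => hx.2 hxf.1

theorem apply_notMem_exist_of_mem_frontier (hu : IsPieceUnifier S R S' H' u) {x : ℕ}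
    (hx : x ∈ R.frontier) : u x ∉ Term.var '' R.exist := by
  obtain ⟨y, hy, hxy⟩ := hu.exists_apply_mem_frontier hx
  rintro ⟨z, hz, hzy⟩
  rw [hxy, Term.var.injEq] at hzy
  exact hz.2 (hzy ▸ hy.1)

theorem varsOf_substSet_subset (hu : IsPieceUnifier S R S' H' u) {T : Set Atom}
    (hT : varsOf T ⊆ varsOf (R.body ∪ R.head)) (hfT : R.frontier ⊆ varsOf T) :
    varsOf (substSet u T) ⊆ varsOf T := by
  intro y hy
  obtain ⟨x, hx, hxy⟩ := mem_varsOf_substSet.1 hy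
  by_cases hxf : x ∈ R.frontier
  · obtain ⟨z, hz, hxz⟩ := hu.exists_apply_mem_frontier hxf
    rw [hxz, Term.var.injEq] at hxy
    exact hxy ▸ hfT hz
  · rw [hu.apply_of_mem_varsOf_rule (hT hx) hxf, Term.var.injEq] at hxy
    exact hxy ▸ hx

theorem exists_apply_of_mem_varsOf (hu : IsPieceUnifier S R S' H' u) {x : ℕ}
    (hx : x ∈ varsOf S) : ∃ y ∈ varsOf R.head ∪ varsOf S, u x = .var y := by
  by_cases hxS' : x ∈ varsOf S'
  · obtain ⟨y, hy, hxy⟩ := hu.exists_apply_mem_head_of_mem_varsOf hxS'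
    exact ⟨y, .inl hy, hxy⟩
  · exact ⟨x, .inr hx, hu.apply_of_notMem (hu.notMem_frontier_of_mem_varsOf hx) hxS'⟩

theorem varsOf_substSet_diff_subset (hu : IsPieceUnifier S R S' H' u) :
    varsOf (substSet u (S \ S')) ⊆ R.frontier ∪ varsOf S := by
  intro y hy
  obtain ⟨x, hx, hxy⟩ := mem_varsOf_substSet.1 hy
  by_cases hxS' : x ∈ varsOf S'
  · obtain ⟨z, hz, hxz⟩ := hu.exists_apply_mem_frontier_of_mem_sepVars ⟨hxS', hx⟩
    rw [hxz, Term.var.injEq] at hxy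
    exact .inl (hxy ▸ hz)
  · have hxS : x ∈ varsOf S := varsOf_mono Set.sdiff_subset hx
    rw [hu.apply_of_notMem (hu.notMem_frontier_of_mem_varsOf hxS) hxS', Term.var.injEq] at hxy
    exact .inr (hxy ▸ hxS)

theorem forall_holdsA_substSet (hu : IsPieceUnifier S R S' H' u) {M : Struct} {v : ℕ → M.D}
    (hhead : ∀ a ∈ substSet u R.head, holdsA M v a)
    (hrest : ∀ a ∈ substSet u (S \ S'), holdsA M v a) :
    ∀ a ∈ substSet u S, holdsA M v a := by
  rintro _ ⟨a, ha, rfl⟩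
  by_cases haS' : a ∈ S'
  · obtain ⟨b, hb, hba⟩ : a.subst u ∈ substSet u H' := hu.substSet_eq ▸ ⟨a, haS', rfl⟩
    exact hba ▸ hhead _ ⟨b, hu.subset_head hb, rfl⟩
  · exact hrest _ ⟨a, ⟨ha, haS'⟩, rfl⟩

end IsPieceUnifier

section Composition

variable {R1 R2 : Rule} {B2' H1' : Set Atom} {u : ℕ → Term}

theorem notMem_exist_of_mem_varsOf_composedBody
    (hdisj : Disjoint (varsOf (R1.body ∪ R1.head)) (varsOf (R2.body ∪ R2.head)))
    (hu : IsPieceUnifier R2.body R1 B2' H1' u) {x : ℕ}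
    (hx : x ∈ varsOf (substSet u R1.body ∪ substSet u (R2.body \ B2'))) :
    x ∉ R1.exist ∧ x ∉ R2.exist := by
  have hR1 {y : ℕ} (hy : y ∈ varsOf R1.body) : y ∉ R2.exist :=
    notMem_exist_of_disjoint hdisj (varsOf_mono Set.subset_union_left hy)
  rcases varsOf_union ▸ hx with hx | hx
  · have hxb := hu.varsOf_substSet_subset (varsOf_mono Set.subset_union_left)
      (fun _ hf => hf.1) hx
    exact ⟨fun h => h.2 hxb, hR1 hxb⟩
  · rcases hu.varsOf_substSet_diff_subset hx with hxf | hxb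
    · exact ⟨fun h => h.2 hxf.1, hR1 hxf.1⟩
    · exact ⟨notMem_exist_of_disjoint hu.disjoint hxb, fun h => h.2 hxb⟩

theorem notMem_exist_of_mem_varsOf_substSet_head
    (hdisj : Disjoint (varsOf (R1.body ∪ R1.head)) (varsOf (R2.body ∪ R2.head)))
    (hu : IsPieceUnifier R2.body R1 B2' H1' u) {x : ℕ}
    (hx : x ∈ varsOf (substSet u R1.head)) : x ∉ R2.exist :=
  notMem_exist_of_disjoint hdisj <| varsOf_mono Set.subset_union_right <|
    hu.varsOf_substSet_subset (varsOf_mono Set.subset_union_right) (fun _ hf => hf.2) hx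

theorem apply_of_mem_exist_right
    (hdisj : Disjoint (varsOf (R1.body ∪ R1.head)) (varsOf (R2.body ∪ R2.head)))
    (hu : IsPieceUnifier R2.body R1 B2' H1' u) {x : ℕ} (hx : x ∈ R2.exist) :
    u x = .var x :=
  hu.apply_of_notMem
    (fun hxf => notMem_exist_of_disjoint hdisj (varsOf_mono Set.subset_union_left hxf.1) hx)
    fun hxB => hx.2 (varsOf_mono hu.subset hxB)

theorem apply_notMem_exist_right_of_mem_frontier
    (hdisj : Disjoint (varsOf (R1.body ∪ R1.head)) (varsOf (R2.body ∪ R2.head)))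
    (hu : IsPieceUnifier R2.body R1 B2' H1' u) {x : ℕ} (hx : x ∈ R2.frontier) :
    u x ∉ Term.var '' R2.exist := by
  obtain ⟨y, hy, hxy⟩ := hu.exists_apply_of_mem_varsOf hx.1
  rintro ⟨z, hz, hzx⟩
  rw [hxy, Term.var.injEq] at hzx
  subst hzx
  exact hy.elim (fun h => notMem_exist_of_disjoint hdisj (varsOf_mono Set.subset_union_right h) hz)
    hz.2

end Composition

theorem composition_sound_case2_general (R1 R2 : Rule)
    (hdisj : Disjoint (varsOf (R1.body ∪ R1.head)) (varsOf (R2.body ∪ R2.head)))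
    (B2' H1' : Set Atom) (u : ℕ → Term)
    (hu : IsPieceUnifier R2.body R1 B2' H1' u) :
    ∀ M : Struct, satRule M R1 → satRule M R2 →
      satRule M ⟨substSet u R1.body ∪ substSet u (R2.body \ B2'),
                 substSet u R1.head ∪ substSet u R2.head⟩ := by
  intro M hM1 hM2 v hv
  have hbody {x} := notMem_exist_of_mem_varsOf_composedBody (x := x) hdisj hu
  obtain ⟨w1, hw1⟩ := hM1.exists_holdsA_substSet_head (fun _ => hu.apply_of_mem_exist)
    (fun _ => hu.apply_notMem_exist_of_mem_frontier) fun a ha => hv a (.inl ha)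
  have hB2 : ∀ a ∈ substSet u R2.body, holdsA M (R1.exist.piecewise w1 v) a :=
    hu.forall_holdsA_substSet hw1 <| (forall_holdsA_piecewise fun _ hx =>
      (hbody (varsOf_union ▸ .inr hx)).1).2 fun a ha => hv a (.inr ha)
  obtain ⟨w2, hw2⟩ := hM2.exists_holdsA_substSet_head
    (fun _ => apply_of_mem_exist_right hdisj hu)
    (fun _ => apply_notMem_exist_right_of_mem_frontier hdisj hu) hB2
  refine ⟨R2.exist.piecewise w2 (R1.exist.piecewise w1 v), fun x hx => ?_, ?_⟩
  · rw [Set.piecewise_eq_of_notMem _ _ _ (hbody hx).2,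
      Set.piecewise_eq_of_notMem _ _ _ (hbody hx).1]
  · rintro a (ha | ha)
    · exact (forall_holdsA_piecewise fun _ hx =>
        notMem_exist_of_mem_varsOf_substSet_head hdisj hu hx).2 hw1 a ha
    · exact hw2 a ha

/-- if some frontier variable of `R2` is unified with an existential variable
of `R1`, the existential composition `u(B1) ∪ u(B2 \ B2') → ∃ (u(H1) ∪ u(H2))` is entailed
by `{R1, R2}`. -/
theorem composition_sound_case2 (R1 R2 : Rule) (h1 : WfRule R1) (h2 : WfRule R2)
    (hs1 : SinglePiece R1) (hs2 : SinglePiece R2)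
    (hdisj : Disjoint (varsOf (R1.body ∪ R1.head)) (varsOf (R2.body ∪ R2.head)))
    (B2' H1' : Set Atom) (u : ℕ → Term)
    (hu : IsPieceUnifier R2.body R1 B2' H1' u)
    (hc : ∃ x ∈ R2.frontier, u x ∈ Term.var '' R1.exist) :
    ∀ M : Struct, satRule M R1 → satRule M R2 →
      satRule M ⟨substSet u R1.body ∪ substSet u (R2.body \ B2'),
                 substSet u R1.head ∪ substSet u R2.head⟩ :=
  composition_sound_case2_general R1 R2 hdisj B2' H1' u hu

end ER
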